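/- arXiv:0908.0041 — 8 statements merged into one kernel-verified Lean document; each statement's English description precedes it below -/
import Mathlib

section
/- Let ψ : I → E₁³ be a unit-speed spacelike curve with nonvanishing curvature κ and Frenet frame (T,N,B) satisfying T' = κN, N' = -εκT + τB, B' = τN, where g(N,N) = ε = ±1 and g(B,B) = -ε. If there exists a unit spacelike vector d and a real number n with |n| < 1 such that g(d, T(s)) = n for all s, then ε = -1 (i.e., the principal normal N is timelike) and τ(s)/κ(s) is constant, equal to ∓cot(φ) where n = cos(φ). -/
/-!
Differentiating `g(d, T) = n` and then `g(d, N) = 0` along the Frenet equations gives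
`g(d, N) = 0` and `τ g(d, B) = ε κ n`. Expanding `d` in the frame `(T, N, B)` (encoded by the
vanishing of a 4 × 4 Gram determinant in dimension three) gives `ε (1 - n²) = -g(d, B)²`, which
forces `ε = -1` since `|n| < 1`. When `n ≠ 0` the torsion never vanishes, so `B` is differentiable
and `g(d, B)` is constant; choosing `φ` with `cos φ = n` and `sin φ = g(d, B)` then gives
`τ = -cot φ κ`.
-/

noncomputable section
open Real

/-- Lorentzian metric of Minkowski 3-space E₁³. -/
def g (u v : ℝ × ℝ × ℝ) : ℝ := -(u.1 * v.1) + u.2.1 * v.2.1 + u.2.2 * v.2.2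

lemma g_comm (u v : ℝ × ℝ × ℝ) : g u v = g v u := by simp only [g]; ring

lemma g_add_right (u v w : ℝ × ℝ × ℝ) : g u (v + w) = g u v + g u w := by
  simp only [g, Prod.fst_add, Prod.snd_add]; ring

lemma g_smul_right (u v : ℝ × ℝ × ℝ) (a : ℝ) : g u (a • v) = a * g u v := by
  simp only [g, Prod.smul_fst, Prod.smul_snd, smul_eq_mul]; ring

lemma ne_zero_of_g_ne_zero {u v : ℝ × ℝ × ℝ} (h : g u v ≠ 0) : v ≠ 0 := by
  rintro rfl
  simp [g] at h

lemma det_gram_eq_zero (v : Fin 4 → ℝ × ℝ × ℝ) :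
    (Matrix.of fun i j => g (v i) (v j)).det = 0 := by
  rw [Matrix.det_succ_row_zero]
  simp only [Fin.sum_univ_four, Matrix.det_fin_three]
  simp [Fin.succAbove, g]
  ring

lemma g_self_eq_of_frame {T N B : ℝ × ℝ × ℝ} {ε : ℝ} (hε : ε ≠ 0) (hTT : g T T = 1)
    (hNN : g N N = ε) (hBB : g B B = -ε) (hTN : g T N = 0) (hTB : g T B = 0)
    (hNB : g N B = 0) (d : ℝ × ℝ × ℝ) :
    ε * g d d = ε * g d T ^ 2 + g d N ^ 2 - g d B ^ 2 := by
  have h := det_gram_eq_zero ![d, T, N, B]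
  rw [Matrix.det_succ_row_zero] at h
  simp only [Fin.sum_univ_four, Matrix.det_fin_three] at h
  simp [Fin.succAbove, g_comm T d, g_comm N d, g_comm B d, g_comm N T, g_comm B T, g_comm B N,
    hTT, hNN, hBB, hTN, hTB, hNB] at h
  apply mul_left_cancel₀ hε
  linear_combination -h

lemma HasDerivAt.const_g (d : ℝ × ℝ × ℝ) {f : ℝ → ℝ × ℝ × ℝ} {f' : ℝ × ℝ × ℝ} {s : ℝ}
    (hf : HasDerivAt f f' s) : HasDerivAt (fun t => g d (f t)) (g d f') s := by
  have h₁ := (ContinuousLinearMap.fst ℝ ℝ (ℝ × ℝ)).hasFDerivAt.comp_hasDerivAt s hf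
  have h₂ := (ContinuousLinearMap.snd ℝ ℝ (ℝ × ℝ)).hasFDerivAt.comp_hasDerivAt s hf
  have h₂₁ := (ContinuousLinearMap.fst ℝ ℝ ℝ).hasFDerivAt.comp_hasDerivAt s h₂
  have h₂₂ := (ContinuousLinearMap.snd ℝ ℝ ℝ).hasFDerivAt.comp_hasDerivAt s h₂
  exact ((h₁.const_mul d.1).neg.add (h₂₁.const_mul d.2.1)).add (h₂₂.const_mul d.2.2)

lemma g_deriv_eq_zero_of_forall_eq {f : ℝ → ℝ × ℝ × ℝ} {d : ℝ × ℝ × ℝ} {c s : ℝ}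
    (hc : ∀ t, g d (f t) = c) (hf : deriv f s ≠ 0) : g d (deriv f s) = 0 := by
  have h := (hasDerivAt_deriv_iff.mpr (differentiableAt_of_deriv_ne_zero hf)).const_g d
  rw [funext hc] at h
  exact h.unique (hasDerivAt_const s c)

lemma g_eq_of_g_deriv_eq_zero {f : ℝ → ℝ × ℝ × ℝ} {d : ℝ × ℝ × ℝ} (hf : ∀ s, deriv f s ≠ 0)
    (h : ∀ s, g d (deriv f s) = 0) (s t : ℝ) : g d (f s) = g d (f t) := by
  have hd s := (hasDerivAt_deriv_iff.mpr (differentiableAt_of_deriv_ne_zero (hf s))).const_g d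
  exact is_const_of_deriv_eq_zero (fun s => (hd s).differentiableAt)
    (fun s => (hd s).deriv.trans (h s)) s t

lemma g_normal_eq_zero {T N : ℝ → ℝ × ℝ × ℝ} {κ : ℝ → ℝ} {ε n : ℝ} {d : ℝ × ℝ × ℝ}
    (hε : ε ≠ 0) (hκ : ∀ s, κ s ≠ 0) (hFr1 : ∀ s, deriv T s = κ s • N s)
    (hNN : ∀ s, g (N s) (N s) = ε) (hdT : ∀ s, g d (T s) = n) (s : ℝ) : g d (N s) = 0 := by
  have hT' : deriv T s ≠ 0 := ne_zero_of_g_ne_zero (u := N s) <| by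
    rw [hFr1, g_smul_right, hNN]; exact mul_ne_zero (hκ s) hε
  have h := g_deriv_eq_zero_of_forall_eq hdT hT'
  rw [hFr1, g_smul_right] at h
  exact (mul_eq_zero.mp h).resolve_left (hκ s)

lemma torsion_mul_g_binormal_eq {T N B : ℝ → ℝ × ℝ × ℝ} {κ τ : ℝ → ℝ} {ε n : ℝ}
    {d : ℝ × ℝ × ℝ} (hε : ε ≠ 0) (hκ : ∀ s, κ s ≠ 0)
    (hFr2 : ∀ s, deriv N s = (-(ε * κ s)) • T s + τ s • B s) (hTT : ∀ s, g (T s) (T s) = 1)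
    (hTB : ∀ s, g (T s) (B s) = 0) (hdT : ∀ s, g d (T s) = n) (hdN : ∀ s, g d (N s) = 0)
    (s : ℝ) : τ s * g d (B s) = ε * κ s * n := by
  have hN' : deriv N s ≠ 0 := ne_zero_of_g_ne_zero (u := T s) <| by
    rw [hFr2, g_add_right, g_smul_right, g_smul_right, hTT, hTB]
    simpa using mul_ne_zero hε (hκ s)
  have h := g_deriv_eq_zero_of_forall_eq hdN hN'
  rw [hFr2, g_add_right, g_smul_right, g_smul_right, hdT] at h
  linarith

lemma exists_cos_sin_eq {x y : ℝ} (h : x ^ 2 + y ^ 2 = 1) : ∃ φ, cos φ = x ∧ sin φ = y := by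
  have hz : ‖(⟨x, y⟩ : ℂ)‖ = 1 := by simp [Complex.norm_eq_sqrt_sq_add_sq, h]
  exact ⟨Complex.arg ⟨x, y⟩, by simpa [hz] using Complex.norm_mul_cos_arg ⟨x, y⟩,
    by simpa [hz] using Complex.norm_mul_sin_arg ⟨x, y⟩⟩

lemma exists_cos_eq_and_eq_neg_cot_mul {κ τ c : ℝ → ℝ} {n : ℝ} (hn : n ^ 2 < 1)
    (hc : ∀ s, c s ^ 2 = 1 - n ^ 2) (hτ : ∀ s, τ s * c s = -(κ s * n))
    (hc_const : ∀ s, n * c s = n * c 0) : ∃ φ, cos φ = n ∧ ∀ s, τ s = -cot φ * κ s := by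
  obtain ⟨φ, hcos, hsin⟩ := exists_cos_sin_eq (x := n) (y := c 0) (by linarith [hc 0])
  refine ⟨φ, hcos, fun s => ?_⟩
  have hc0 s : c s ≠ 0 := fun h => by nlinarith [hc s, h]
  rw [cot_eq_cos_div_sin, hcos, hsin]
  field_simp [hc0 0]
  refine mul_right_cancel₀ (hc0 s) ?_
  linear_combination c 0 * hτ s + κ s * hc_const s

theorem stmt1_general (T N B : ℝ → ℝ × ℝ × ℝ) (κ τ : ℝ → ℝ) (ε : ℝ) (d : ℝ × ℝ × ℝ) (n : ℝ)
    (hε : ε = 1 ∨ ε = -1)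
    (hκ : ∀ s, κ s ≠ 0)
    (hFr1 : ∀ s, deriv T s = κ s • N s)
    (hFr2 : ∀ s, deriv N s = (-(ε * κ s)) • T s + τ s • B s)
    (hFr3 : ∀ s, deriv B s = τ s • N s)
    (hTT : ∀ s, g (T s) (T s) = 1)
    (hNN : ∀ s, g (N s) (N s) = ε)
    (hBB : ∀ s, g (B s) (B s) = -ε)
    (hTN : ∀ s, g (T s) (N s) = 0)
    (hTB : ∀ s, g (T s) (B s) = 0)
    (hNB : ∀ s, g (N s) (B s) = 0)
    (hd : g d d = 1) (hn : |n| < 1)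
    (hdT : ∀ s, g d (T s) = n) :
    ε = -1 ∧ ∃ φ : ℝ, cos φ = n ∧
      ((∀ s, τ s = -Real.cot φ * κ s) ∨ (∀ s, τ s = Real.cot φ * κ s)) := by
  have hε0 : ε ≠ 0 := by rcases hε with rfl | rfl <;> norm_num
  have hn2 : n ^ 2 < 1 := sq_lt_one_iff_abs_lt_one n |>.mpr hn
  have hdN := g_normal_eq_zero hε0 hκ hFr1 hNN hdT
  have hτ := torsion_mul_g_binormal_eq hε0 hκ hFr2 hTT hTB hdT hdN
  have hdB s : ε * (1 - n ^ 2) = -g d (B s) ^ 2 := by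
    have h := g_self_eq_of_frame hε0 (hTT s) (hNN s) (hBB s) (hTN s) (hTB s) (hNB s) d
    rw [hd, hdT, hdN] at h
    linear_combination h
  obtain rfl : ε = -1 := hε.resolve_left fun h => by
    nlinarith [hdB 0, sq_nonneg (g d (B 0))]
  have hdB_const s : n * g d (B s) = n * g d (B 0) := by
    rcases eq_or_ne n 0 with rfl | hn0
    · simp
    refine congrArg (n * ·) (g_eq_of_g_deriv_eq_zero (fun t => ?_) (fun t => ?_) s 0)
    · refine ne_zero_of_g_ne_zero (u := N t) ?_
      rw [hFr3, g_smul_right, hNN]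
      have : τ t * g d (B t) ≠ 0 := by rw [hτ]; simpa using mul_ne_zero (hκ t) hn0
      simpa using left_ne_zero_of_mul this
    · rw [hFr3, g_smul_right, hdN, mul_zero]
  obtain ⟨φ, hcos, hτφ⟩ := exists_cos_eq_and_eq_neg_cot_mul (κ := κ) (τ := τ) hn2
    (fun s => by linarith [hdB s]) (fun s => by linarith [hτ s]) hdB_const
  exact ⟨rfl, φ, hcos, Or.inl hτφ⟩

theorem stmt1 (ψ T N B : ℝ → ℝ × ℝ × ℝ) (κ τ : ℝ → ℝ) (ε : ℝ) (d : ℝ × ℝ × ℝ) (n : ℝ)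
    (hε : ε = 1 ∨ ε = -1)
    (hκ : ∀ s, κ s ≠ 0)
    (hT : ∀ s, deriv ψ s = T s)
    (hFr1 : ∀ s, deriv T s = κ s • N s)
    (hFr2 : ∀ s, deriv N s = (-(ε * κ s)) • T s + τ s • B s)
    (hFr3 : ∀ s, deriv B s = τ s • N s)
    (hTT : ∀ s, g (T s) (T s) = 1)
    (hNN : ∀ s, g (N s) (N s) = ε)
    (hBB : ∀ s, g (B s) (B s) = -ε)
    (hTN : ∀ s, g (T s) (N s) = 0)
    (hTB : ∀ s, g (T s) (B s) = 0)
    (hNB : ∀ s, g (N s) (B s) = 0)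
    (hd : g d d = 1) (hn : |n| < 1)
    (hdT : ∀ s, g d (T s) = n) :
    ε = -1 ∧ ∃ φ : ℝ, cos φ = n ∧
      ((∀ s, τ s = -Real.cot φ * κ s) ∨ (∀ s, τ s = Real.cot φ * κ s)) :=
  stmt1_general T N B κ τ ε d n hε hκ hFr1 hFr2 hFr3 hTT hNN hBB hTN hTB hNB hd hn hdT
end
end

section
/- Let T : ℝ → ℝ³ be given by T(θ) = √(1-n²)·(sinh(√(1+m²) θ), cosh(√(1+m²) θ), m) where m = n/√(1-n²) and |n| < 1. Then T satisfies: (i) g(T(θ), T(θ)) = 1 where g(u,v) = -u₁v₁ + u₂v₂ + u₃v₃; (ii) the third component g(T(θ), e₃) = n is constant, where e₃ = (0,0,1); and (iii) the ODE T''' - (1+m²)T' = 0. -/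
noncomputable section
open Real

/- In its first two components `T` is a fixed vector moved by the hyperbolic rotations
`θ ↦ exp (kθ J)`, `k = √(1 + m²)`. The derivative of such a curve is again one (with the two
coefficients swapped and scaled by `k`), so `T''' = k² T'` is a computation on coefficients, and
since `g` is invariant under these rotations, `g(T, T) = (1 - n²)(1 + m²) = 1`. -/

def hypCurve (a b c k θ : ℝ) : ℝ × ℝ × ℝ :=
  (a * sinh (k * θ) + b * cosh (k * θ), a * cosh (k * θ) + b * sinh (k * θ), c)

section hypCurve

variable (a b c k : ℝ)

theorem hasDerivAt_hypCurve (θ : ℝ) :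
    HasDerivAt (hypCurve a b c k) (hypCurve (k * b) (k * a) 0 k θ) θ := by
  have hkθ : HasDerivAt (fun θ : ℝ => k * θ) k θ := by
    simpa using (hasDerivAt_id θ).const_mul k
  have hsinh := (hasDerivAt_sinh (k * θ)).comp θ hkθ
  have hcosh := (hasDerivAt_cosh (k * θ)).comp θ hkθ
  convert ((hsinh.const_mul a).add (hcosh.const_mul b)).prodMk
    (((hcosh.const_mul a).add (hsinh.const_mul b)).prodMk (hasDerivAt_const θ c)) using 1
  · rfl
  · simp only [hypCurve, Prod.mk.injEq]
    exact ⟨by ring, by ring, trivial⟩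

theorem deriv_hypCurve : deriv (hypCurve a b c k) = hypCurve (k * b) (k * a) 0 k :=
  funext fun θ => (hasDerivAt_hypCurve a b c k θ).deriv

theorem deriv_deriv_deriv_hypCurve :
    deriv (deriv (deriv (hypCurve a b c k))) = k ^ 2 • deriv (hypCurve a b c k) := by
  simp only [deriv_hypCurve]
  funext θ
  simp only [hypCurve, Pi.smul_apply, Prod.smul_mk, smul_eq_mul, Prod.mk.injEq]
  refine ⟨by ring, by ring, by ring⟩

theorem g_hypCurve_self (θ : ℝ) :
    g (hypCurve a b c k θ) (hypCurve a b c k θ) = a ^ 2 - b ^ 2 + c ^ 2 := by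
  simp only [g, hypCurve]
  linear_combination (a ^ 2 - b ^ 2) * cosh_sq_sub_sinh_sq (k * θ)

theorem g_hypCurve_e₃ (θ : ℝ) : g (hypCurve a b c k θ) (0, 0, 1) = c := by
  simp [g, hypCurve]

end hypCurve

theorem stmt4 (n m : ℝ) (hn : |n| < 1) (hm : m = n / Real.sqrt (1 - n ^ 2))
    (T : ℝ → ℝ × ℝ × ℝ)
    (hT : ∀ θ, T θ = Real.sqrt (1 - n ^ 2) •
      (Real.sinh (Real.sqrt (1 + m ^ 2) * θ),
       Real.cosh (Real.sqrt (1 + m ^ 2) * θ), m)) :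
    (∀ θ, g (T θ) (T θ) = 1) ∧
    (∀ θ, g (T θ) ((0 : ℝ), (0 : ℝ), (1 : ℝ)) = n) ∧
    (∀ θ, deriv (deriv (deriv T)) θ - (1 + m ^ 2) • deriv T θ = 0) := by
  set a := √(1 - n ^ 2)
  set k := √(1 + m ^ 2)
  have hn2 : 0 < 1 - n ^ 2 := by nlinarith [abs_lt.mp hn]
  have ha2 : a ^ 2 = 1 - n ^ 2 := sq_sqrt hn2.le
  have ham : a * m = n := by rw [hm, mul_div_cancel₀ _ (sqrt_pos.mpr hn2).ne']
  have hk2 : k ^ 2 = 1 + m ^ 2 := sq_sqrt (by positivity)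
  have hT' : T = hypCurve a 0 (a * m) k := by
    funext θ
    simp [hT, hypCurve]
  subst hT'
  refine ⟨fun θ => ?_, fun θ => ?_, fun θ => ?_⟩
  · rw [g_hypCurve_self]
    linear_combination ha2 + (a * m + n) * ham
  · rw [g_hypCurve_e₃, ham]
  · rw [deriv_deriv_deriv_hypCurve, hk2, Pi.smul_apply, sub_self]
end
end

section
/- Suppose T₁, T₂ : ℝ → ℝ, t : ℝ → ℝ smooth with T₁ = a·sinh∘t, T₂ = a·cosh∘t (a ≠ 0), and both T₁ and T₂ satisfy the scalar ODE y''' - (1+m²) y' = 0. Then t'·t'' = 0 and (1+m²)t' - (t')³ - t''' = 0 pointwise. Consequently, if t' is nowhere zero, then t(θ) = c₂ + c₁θ with c₁² = 1 + m². -/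
noncomputable section
open Real

theorem stmt5 (a m : ℝ) (ha : a ≠ 0) (t T₁ T₂ : ℝ → ℝ)
    (ht : ContDiff ℝ (⊤ : ℕ∞) t)
    (hT1 : T₁ = fun θ => a * Real.sinh (t θ))
    (hT2 : T₂ = fun θ => a * Real.cosh (t θ))
    (hODE1 : ∀ θ, deriv (deriv (deriv T₁)) θ - (1 + m ^ 2) * deriv T₁ θ = 0)
    (hODE2 : ∀ θ, deriv (deriv (deriv T₂)) θ - (1 + m ^ 2) * deriv T₂ θ = 0) :
    (∀ θ, deriv t θ * deriv (deriv t) θ = 0) ∧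
    (∀ θ, (1 + m ^ 2) * deriv t θ - (deriv t θ) ^ 3 - deriv (deriv (deriv t)) θ = 0) ∧
    ((∀ θ, deriv t θ ≠ 0) →
      ∃ c₁ c₂ : ℝ, c₁ ^ 2 = 1 + m ^ 2 ∧ ∀ θ, t θ = c₂ + c₁ * θ) := by
  have htI : ContDiff ℝ (⊤ : ℕ∞) t := ht.of_le (by simp)
  set u := deriv t with hu
  set v := deriv u with hv
  set w := deriv v with hw
  have huI : ContDiff ℝ (⊤ : ℕ∞) u := (contDiff_infty_iff_deriv.mp htI).2
  have hvI : ContDiff ℝ (⊤ : ℕ∞) v := (contDiff_infty_iff_deriv.mp huI).2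
  have htd : ∀ θ, HasDerivAt t (u θ) θ :=
    fun θ => (htI.differentiable (by simp) θ).hasDerivAt
  have hud : ∀ θ, HasDerivAt u (v θ) θ :=
    fun θ => (huI.differentiable (by simp) θ).hasDerivAt
  have hvd : ∀ θ, HasDerivAt v (w θ) θ :=
    fun θ => (hvI.differentiable (by simp) θ).hasDerivAt
  -- first derivatives
  have h1 : ∀ θ, HasDerivAt T₁ (a * (Real.cosh (t θ) * u θ)) θ := by
    intro θ; rw [hT1]; exact ((htd θ).sinh).const_mul a
  have h2 : ∀ θ, HasDerivAt T₂ (a * (Real.sinh (t θ) * u θ)) θ := by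
    intro θ; rw [hT2]; exact ((htd θ).cosh).const_mul a
  have hd1 : deriv T₁ = fun θ => a * (Real.cosh (t θ) * u θ) := funext fun θ => (h1 θ).deriv
  have hd2 : deriv T₂ = fun θ => a * (Real.sinh (t θ) * u θ) := funext fun θ => (h2 θ).deriv
  -- second derivatives
  have h1' : ∀ θ, HasDerivAt (deriv T₁)
      (a * ((Real.sinh (t θ) * u θ) * u θ + Real.cosh (t θ) * v θ)) θ := by
    intro θ; rw [hd1]
    exact (((htd θ).cosh.mul (hud θ))).const_mul a
  have h2' : ∀ θ, HasDerivAt (deriv T₂)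
      (a * ((Real.cosh (t θ) * u θ) * u θ + Real.sinh (t θ) * v θ)) θ := by
    intro θ; rw [hd2]
    exact (((htd θ).sinh.mul (hud θ))).const_mul a
  have hdd1 : deriv (deriv T₁) = fun θ => a * ((Real.sinh (t θ) * u θ) * u θ + Real.cosh (t θ) * v θ) :=
    funext fun θ => (h1' θ).deriv
  have hdd2 : deriv (deriv T₂) = fun θ => a * ((Real.cosh (t θ) * u θ) * u θ + Real.sinh (t θ) * v θ) :=
    funext fun θ => (h2' θ).deriv
  -- third derivatives
  have h1'' : ∀ θ, HasDerivAt (deriv (deriv T₁))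
      (a * ((((Real.cosh (t θ) * u θ) * u θ + Real.sinh (t θ) * v θ) * u θ
            + (Real.sinh (t θ) * u θ) * v θ)
          + ((Real.sinh (t θ) * u θ) * v θ + Real.cosh (t θ) * w θ))) θ := by
    intro θ; rw [hdd1]
    exact (((((htd θ).sinh.mul (hud θ)).mul (hud θ)).add
      ((htd θ).cosh.mul (hvd θ)))).const_mul a
  have h2'' : ∀ θ, HasDerivAt (deriv (deriv T₂))
      (a * ((((Real.sinh (t θ) * u θ) * u θ + Real.cosh (t θ) * v θ) * u θ
            + (Real.cosh (t θ) * u θ) * v θ)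
          + ((Real.cosh (t θ) * u θ) * v θ + Real.sinh (t θ) * w θ))) θ := by
    intro θ; rw [hdd2]
    exact (((((htd θ).cosh.mul (hud θ)).mul (hud θ)).add
      ((htd θ).sinh.mul (hvd θ)))).const_mul a
  -- the two scalar equations, with a cancelled
  have key : ∀ θ, (Real.cosh (t θ) * ((w θ + (u θ)^3) - (1 + m^2) * u θ)
        + Real.sinh (t θ) * (3 * u θ * v θ) = 0)
      ∧ (Real.sinh (t θ) * ((w θ + (u θ)^3) - (1 + m^2) * u θ)
        + Real.cosh (t θ) * (3 * u θ * v θ) = 0) := by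
    intro θ
    have e1 := hODE1 θ
    have e2 := hODE2 θ
    rw [(h1'' θ).deriv, hd1] at e1
    rw [(h2'' θ).deriv, hd2] at e2
    constructor
    · have : a * (Real.cosh (t θ) * ((w θ + (u θ)^3) - (1 + m^2) * u θ)
        + Real.sinh (t θ) * (3 * u θ * v θ)) = 0 := by linear_combination e1
      rcases mul_eq_zero.mp this with h | h
      · exact absurd h ha
      · exact h
    · have : a * (Real.sinh (t θ) * ((w θ + (u θ)^3) - (1 + m^2) * u θ)
        + Real.cosh (t θ) * (3 * u θ * v θ)) = 0 := by linear_combination e2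
      rcases mul_eq_zero.mp this with h | h
      · exact absurd h ha
      · exact h
  have hA : ∀ θ, (w θ + (u θ)^3) - (1 + m^2) * u θ = 0 := by
    intro θ
    have hc := Real.cosh_sq_sub_sinh_sq (t θ)
    obtain ⟨e1, e2⟩ := key θ
    linear_combination Real.cosh (t θ) * e1 - Real.sinh (t θ) * e2
      - ((w θ + (u θ)^3 - (1 + m^2) * u θ)) * hc
  have hB : ∀ θ, u θ * v θ = 0 := by
    intro θ
    have hc := Real.cosh_sq_sub_sinh_sq (t θ)
    obtain ⟨e1, e2⟩ := key θ
    linear_combination (-(1/3) * Real.sinh (t θ)) * e1 + ((1/3) * Real.cosh (t θ)) * e2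
      - (u θ * v θ) * hc
  refine ⟨hB, fun θ => by linarith [hA θ], ?_⟩
  intro hne
  have hv0 : ∀ θ, v θ = 0 := by
    intro θ
    rcases mul_eq_zero.mp (hB θ) with h | h
    · exact absurd h (hne θ)
    · exact h
  have huc : ∀ θ, u θ = u 0 := by
    intro θ
    exact is_const_of_deriv_eq_zero (huI.differentiable (by simp)) hv0 θ 0
  have hw0 : ∀ θ, w θ = 0 := by
    have : v = fun _ => 0 := funext hv0
    intro θ; rw [hw, this]; simp
  have hc1 : (u 0) ^ 2 = 1 + m ^ 2 := by
    have := hA 0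
    rw [hw0 0] at this
    have h0 := hne 0
    have : u 0 * ((u 0)^2 - (1 + m^2)) = 0 := by linear_combination this
    rcases mul_eq_zero.mp this with h | h
    · exact absurd h (hne 0)
    · linarith
  refine ⟨u 0, t 0, hc1, fun θ => ?_⟩
  have hg : ∀ x, HasDerivAt (fun x => t x - u 0 * x) 0 x := by
    intro x
    have := (htd x).sub ((hasDerivAt_id x).const_mul (u 0))
    simp only [huc x, id, mul_one, sub_self] at this
    exact this
  have := is_const_of_deriv_eq_zero (fun x => (hg x).differentiableAt)
    (fun x => (hg x).deriv) θ 0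
  linarith [this]
end
end

section
/- Define ψ : ℝ → ℝ³ by ψ(θ) = a·(-sech(θ), 2 arctan(tanh(θ/2)), 0) with a > 0. Then reparametrized by s = a·tanh(θ), ψ is a unit-speed spacelike plane curve in E₁³ with g(ψ̇, ψ̇) = 1 (derivative with respect to s), whose curvature is κ(s) = a/(a² - s²) for |s| < a, and whose principal normal is timelike. -/
/-!
Substituting `θ = artanh u`, one has `sech θ = √(1 - u²)` and, by the Gudermannian identity
`2 arctan (tanh (θ/2)) = arctan (sinh θ) = arcsin (tanh θ)`, the reparametrized curve is
`a • (-√(1 - u²), arcsin u, 0)` with `u = s / a`. Its velocity `(u, 1, 0) / √(1 - u²)` has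
Lorentzian square `1`, and its acceleration `a⁻¹ (1, u, 0) / (1 - u²)^(3/2)` has Lorentzian square
`-a⁻² / (1 - u²)² = -(a / (a² - s²))²`.
-/

noncomputable section
open Real

/-- Inverse hyperbolic tangent. -/
def artanh (x : ℝ) : ℝ := Real.log ((1 + x) / (1 - x)) / 2

open Set

theorem artanh_eq_real_artanh {x : ℝ} (hx : x ∈ Icc (-1) 1) : _root_.artanh x = Real.artanh x := by
  rw [Real.artanh_eq_half_log hx, _root_.artanh]
  ring

theorem two_mul_arctan_tanh_half (θ : ℝ) : 2 * arctan (tanh (θ / 2)) = arctan (sinh θ) := by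
  rw [two_mul_arctan (neg_one_lt_tanh _) (tanh_lt_one _)]
  congr 1
  have hc := (cosh_pos (θ / 2)).ne'
  have hpy := cosh_sq_sub_sinh_sq (θ / 2)
  conv_rhs => rw [← mul_div_cancel₀ θ (two_ne_zero' ℝ), sinh_two_mul]
  rw [tanh_eq_sinh_div_cosh]
  field_simp
  rw [hpy]
  ring

theorem HasDerivAt.comp_div_const {E : Type*} [NormedAddCommGroup E] [NormedSpace ℝ E]
    {f : ℝ → E} {f' : E} {a x : ℝ} (hf : HasDerivAt f f' (x / a)) :
    HasDerivAt (fun y => f (y / a)) (a⁻¹ • f') x := by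
  simpa [Function.comp_def] using hf.scomp x ((hasDerivAt_id x).div_const a)

theorem hasDerivAt_of_eqOn {E : Type*} [NormedAddCommGroup E] [NormedSpace ℝ E]
    {f F F' : ℝ → E} {U : Set ℝ} (hU : IsOpen U) (hfF : EqOn f F U)
    (hF : ∀ x ∈ U, HasDerivAt F (F' x) x) : ∀ x ∈ U, HasDerivAt f (F' x) x :=
  fun x hx => (hF x hx).congr_of_eventuallyEq (hfF.eventuallyEq_of_mem (hU.mem_nhds hx))

theorem g_smul_self (c : ℝ) (v : ℝ × ℝ × ℝ) : g (c • v) (c • v) = c ^ 2 * g v v := by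
  simp only [g, Prod.smul_fst, Prod.smul_snd, smul_eq_mul]
  ring

def unitCurve (u : ℝ) : ℝ × ℝ × ℝ := (-√(1 - u ^ 2), arcsin u, 0)

def unitCurveVel (u : ℝ) : ℝ × ℝ × ℝ := (u / √(1 - u ^ 2), 1 / √(1 - u ^ 2), 0)

def unitCurveAcc (u : ℝ) : ℝ × ℝ × ℝ := (1 / √(1 - u ^ 2) ^ 3, u / √(1 - u ^ 2) ^ 3, 0)

theorem curve_eq_unitCurve {x : ℝ} (hx : x ∈ Ioo (-1) 1) :
    ((-(cosh (_root_.artanh x))⁻¹, 2 * arctan (tanh (_root_.artanh x / 2)), (0 : ℝ)) : ℝ × ℝ × ℝ) =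
      unitCurve x := by
  rw [artanh_eq_real_artanh (Ioo_subset_Icc_self hx), two_mul_arctan_tanh_half,
    cosh_artanh hx, sinh_artanh hx, ← arcsin_eq_arctan hx, one_div, inv_inv, unitCurve]

section
variable {u : ℝ} (hu : u ∈ Ioo (-1) 1)
include hu

theorem one_sub_sq_pos : 0 < 1 - u ^ 2 := by
  obtain ⟨h1, h2⟩ := hu
  nlinarith

theorem hasDerivAt_sqrt_one_sub_sq : HasDerivAt (fun v => √(1 - v ^ 2)) (-u / √(1 - u ^ 2)) u := by
  convert ((hasDerivAt_pow 2 u).const_sub 1).sqrt (one_sub_sq_pos hu).ne' using 1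
  field_simp
  ring

theorem hasDerivAt_unitCurve : HasDerivAt unitCurve (unitCurveVel u) u := by
  have h1 : HasDerivAt (fun v => -√(1 - v ^ 2)) (u / √(1 - u ^ 2)) u := by
    simpa [neg_div] using (hasDerivAt_sqrt_one_sub_sq hu).fun_neg
  have h2 := hasDerivAt_arcsin (x := u) (by grind) (by grind)
  exact h1.prodMk (h2.prodMk (hasDerivAt_const u 0))

theorem hasDerivAt_unitCurveVel : HasDerivAt unitCurveVel (unitCurveAcc u) u := by
  have hs := sqrt_pos.mpr (one_sub_sq_pos hu)
  have hs2 := sq_sqrt (one_sub_sq_pos hu).le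
  have h1 : HasDerivAt (fun v => v / √(1 - v ^ 2)) (1 / √(1 - u ^ 2) ^ 3) u := by
    refine ((hasDerivAt_id' u).fun_div (hasDerivAt_sqrt_one_sub_sq hu) hs.ne').congr_deriv ?_
    field_simp
    linear_combination hs2
  have h2 : HasDerivAt (fun v => 1 / √(1 - v ^ 2)) (u / √(1 - u ^ 2) ^ 3) u := by
    refine ((hasDerivAt_const u 1).fun_div (hasDerivAt_sqrt_one_sub_sq hu) hs.ne').congr_deriv ?_
    field_simp
    ring
  exact h1.prodMk (h2.prodMk (hasDerivAt_const u 0))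

theorem g_unitCurveVel_self : g (unitCurveVel u) (unitCurveVel u) = 1 := by
  have hs := sqrt_pos.mpr (one_sub_sq_pos hu)
  have hs2 := sq_sqrt (one_sub_sq_pos hu).le
  simp only [g, unitCurveVel]
  field_simp
  linear_combination -hs2

theorem g_unitCurveAcc_self : g (unitCurveAcc u) (unitCurveAcc u) = -1 / (1 - u ^ 2) ^ 2 := by
  have hs := sqrt_pos.mpr (one_sub_sq_pos hu)
  have hs2 := sq_sqrt (one_sub_sq_pos hu).le
  have hs6 : √(1 - u ^ 2) ^ 6 = (1 - u ^ 2) ^ 3 := by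
    rw [show 6 = 2 * 3 by rfl, pow_mul, hs2]
  simp only [g, unitCurveAcc]
  field_simp
  rw [hs6]
  field_simp
  ring

end

theorem stmt9 (a : ℝ) (ha : a > 0)
    (ψ : ℝ → ℝ × ℝ × ℝ)
    (hψ : ∀ θ, ψ θ = a • (-(Real.cosh θ)⁻¹, 2 * Real.arctan (Real.tanh (θ / 2)), (0 : ℝ)))
    (ψs : ℝ → ℝ × ℝ × ℝ)
    (hrep : ∀ s, ψs s = ψ (_root_.artanh (s / a))) :
    ∀ s, |s| < a →
      g (deriv ψs s) (deriv ψs s) = 1 ∧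
      Real.sqrt |g (deriv (deriv ψs) s) (deriv (deriv ψs) s)| = a / (a ^ 2 - s ^ 2) ∧
      g (deriv (deriv ψs) s) (deriv (deriv ψs) s) < 0 := by
  have hscaled : ∀ t ∈ Ioo (-a) a, t / a ∈ Ioo (-1) 1 := fun t ht =>
    ⟨by rw [lt_div_iff₀ ha]; linarith [ht.1], by rw [div_lt_one ha]; exact ht.2⟩
  have hψs : EqOn ψs (fun t => a • unitCurve (t / a)) (Ioo (-a) a) := fun t ht => by
    rw [hrep, hψ, curve_eq_unitCurve (hscaled t ht)]
  have hvel : ∀ t ∈ Ioo (-a) a, HasDerivAt ψs (unitCurveVel (t / a)) t :=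
    hasDerivAt_of_eqOn isOpen_Ioo hψs fun t ht => by
      simpa [smul_smul, ha.ne'] using
        (hasDerivAt_unitCurve (hscaled t ht)).comp_div_const.fun_const_smul a
  have hacc : ∀ t ∈ Ioo (-a) a, HasDerivAt (deriv ψs) (a⁻¹ • unitCurveAcc (t / a)) t :=
    hasDerivAt_of_eqOn isOpen_Ioo (fun t ht => (hvel t ht).deriv) fun t ht =>
      (hasDerivAt_unitCurveVel (hscaled t ht)).comp_div_const
  intro s hs
  have hs' : s ∈ Ioo (-a) a := abs_lt.mp hs
  have hpos : 0 < a ^ 2 - s ^ 2 := by nlinarith [hs'.1, hs'.2]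
  have hκ : a⁻¹ ^ 2 * (-1 / (1 - (s / a) ^ 2) ^ 2) = -(a / (a ^ 2 - s ^ 2)) ^ 2 := by
    field_simp
  rw [(hvel s hs').deriv, (hacc s hs').deriv, g_smul_self, g_unitCurveVel_self (hscaled s hs'),
    g_unitCurveAcc_self (hscaled s hs'), hκ, abs_neg, abs_sq, sqrt_sq (by positivity)]
  exact ⟨rfl, rfl, neg_neg_of_pos (by positivity)⟩
end
end

section
/- Let h, r be real numbers with h ≠ 0 and h² + r² ≠ 1, and define ψ : ℝ → ℝ³ componentwise by ψ₁(θ) = (h·e^{θ/h}/(h²+r²-1))·(cosh(√(h²+r²)θ/h) - sinh(√(h²+r²)θ/h)/√(h²+r²)), ψ₂(θ) = (h·e^{θ/h}/(h²+r²-1))·(sinh(√(h²+r²)θ/h) - cosh(√(h²+r²)θ/h)/√(h²+r²)), ψ₃(θ) = r·e^{θ/h}/√(h²+r²). Then with s = e^{θ/h}, ψ is a unit-speed spacelike curve in E₁³ (g(dψ/ds, dψ/ds) = 1) and its tangent dψ/ds has constant third component r/√(h²+r²). -/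
/-! Substituting `θ = h log s` turns `ψ` into
`s ↦ (h s/(m²-1) (cosh - sinh/m), h s/(m²-1) (sinh - cosh/m), r s/m)` evaluated at `m log s`,
where `m = √(h² + r²)`. Differentiating in `s`, the factor `m - m⁻¹ = (m² - 1)/m` cancels the
denominator, so the tangent is `(h sinh, h cosh, r)/m`, whose Lorentzian square is
`(h² (cosh² - sinh²) + r²)/m² = 1`. -/

noncomputable section
open Real

theorem hasDerivAt_mul_cosh_log_sub {m s : ℝ} (hm : m ≠ 0) (hs : s ≠ 0) :
    HasDerivAt (fun t => t * (cosh (m * log t) - sinh (m * log t) / m))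
      ((m - m⁻¹) * sinh (m * log s)) s := by
  have hml := (hasDerivAt_log hs).const_mul m
  refine ((hasDerivAt_id' s).mul (((hasDerivAt_cosh _).comp s hml).sub
    (((hasDerivAt_sinh _).comp s hml).div_const m))).congr_deriv ?_
  simp only [Pi.sub_apply, Function.comp_apply]
  field_simp
  ring

theorem hasDerivAt_mul_sinh_log_sub {m s : ℝ} (hm : m ≠ 0) (hs : s ≠ 0) :
    HasDerivAt (fun t => t * (sinh (m * log t) - cosh (m * log t) / m))
      ((m - m⁻¹) * cosh (m * log s)) s := by
  have hml := (hasDerivAt_log hs).const_mul m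
  refine ((hasDerivAt_id' s).mul (((hasDerivAt_sinh _).comp s hml).sub
    (((hasDerivAt_cosh _).comp s hml).div_const m))).congr_deriv ?_
  simp only [Pi.sub_apply, Function.comp_apply]
  field_simp
  ring

theorem hasDerivAt_lorentzHelix {a b m s : ℝ} (hm : m ≠ 0) (hm1 : m ^ 2 ≠ 1) (hs : s ≠ 0) :
    HasDerivAt (fun t => (a / (m ^ 2 - 1) * (t * (cosh (m * log t) - sinh (m * log t) / m)),
        a / (m ^ 2 - 1) * (t * (sinh (m * log t) - cosh (m * log t) / m)), b / m * t))
      (a * sinh (m * log s) / m, a * cosh (m * log s) / m, b / m) s := by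
  have hc : m ^ 2 - 1 ≠ 0 := sub_ne_zero.mpr hm1
  refine (((hasDerivAt_mul_cosh_log_sub hm hs).const_mul (a / (m ^ 2 - 1))).prodMk
    (((hasDerivAt_mul_sinh_log_sub hm hs).const_mul (a / (m ^ 2 - 1))).prodMk
      ((hasDerivAt_id' s).const_mul (b / m)))).congr_deriv ?_
  refine Prod.ext ?_ (Prod.ext ?_ ?_) <;> field_simp

theorem stmt11 (h r : ℝ) (hh : h ≠ 0) (hhr : h ^ 2 + r ^ 2 ≠ 1)
    (ψ : ℝ → ℝ × ℝ × ℝ)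
    (hψ : ∀ θ, ψ θ =
      ((h * Real.exp (θ / h) / (h ^ 2 + r ^ 2 - 1)) *
        (Real.cosh (Real.sqrt (h ^ 2 + r ^ 2) * θ / h)
          - Real.sinh (Real.sqrt (h ^ 2 + r ^ 2) * θ / h) / Real.sqrt (h ^ 2 + r ^ 2)),
       (h * Real.exp (θ / h) / (h ^ 2 + r ^ 2 - 1)) *
        (Real.sinh (Real.sqrt (h ^ 2 + r ^ 2) * θ / h)
          - Real.cosh (Real.sqrt (h ^ 2 + r ^ 2) * θ / h) / Real.sqrt (h ^ 2 + r ^ 2)),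
       r * Real.exp (θ / h) / Real.sqrt (h ^ 2 + r ^ 2)))
    (ψs : ℝ → ℝ × ℝ × ℝ)
    (hrep : ∀ s, ψs s = ψ (h * Real.log s)) :
    ∀ s, 0 < s →
      g (deriv ψs s) (deriv ψs s) = 1 ∧
      (deriv ψs s).2.2 = r / Real.sqrt (h ^ 2 + r ^ 2) := by
  intro s hs
  set m := √(h ^ 2 + r ^ 2)
  have hm2 : m ^ 2 = h ^ 2 + r ^ 2 := sq_sqrt (by positivity)
  have hm : m ≠ 0 := sqrt_ne_zero'.mpr (by positivity)
  have hloc : ψs =ᶠ[nhds s] fun t =>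
      (h / (m ^ 2 - 1) * (t * (cosh (m * log t) - sinh (m * log t) / m)),
        h / (m ^ 2 - 1) * (t * (sinh (m * log t) - cosh (m * log t) / m)), r / m * t) := by
    filter_upwards [eventually_gt_nhds hs] with t ht
    rw [hrep, hψ, mul_div_cancel_left₀ _ hh, mul_div_assoc m, mul_div_cancel_left₀ _ hh,
      exp_log ht, hm2]
    ext <;> simp only <;> ring
  rw [((hasDerivAt_lorentzHelix hm (hm2 ▸ hhr) hs.ne').congr_of_eventuallyEq hloc).deriv]
  refine ⟨?_, rfl⟩
  have hcs := cosh_sq_sub_sinh_sq (m * log s)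
  simp only [g]
  field_simp
  linear_combination h ^ 2 * hcs - hm2
end
end

section
/- Let n ∈ (-1,1), m = n/√(1-n²), and let κ : ℝ → ℝ be a smooth positive function. Define ψ(s) = √(1-n²) ∫₀ˢ (sinh(√(1+m²) θ(u)), cosh(√(1+m²) θ(u)), m) du where θ(u) = ∫₀ᵘ κ(v)dv. Then ψ is a unit-speed spacelike curve in E₁³ whose curvature equals κ(s), whose torsion-to-curvature ratio is the constant m, and whose principal normal ψ''(s) is timelike (g(ψ'', ψ'') < 0). -/
noncomputable section
open Real

lemma hasDerivAt_prod3 {f1 f2 f3 : ℝ → ℝ} {d1 d2 d3 : ℝ} {x : ℝ}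
    (h1 : HasDerivAt f1 d1 x) (h2 : HasDerivAt f2 d2 x) (h3 : HasDerivAt f3 d3 x) :
    HasDerivAt (fun u => ((f1 u, f2 u, f3 u) : ℝ × ℝ × ℝ)) ((d1, d2, d3) : ℝ × ℝ × ℝ) x :=
  h1.prodMk (h2.prodMk h3)

theorem stmt12 (n m : ℝ) (hn : n ∈ Set.Ioo (-1 : ℝ) 1)
    (hm : m = n / Real.sqrt (1 - n ^ 2))
    (κ : ℝ → ℝ) (hκ : ContDiff ℝ (⊤ : ℕ∞) κ) (hκpos : ∀ s, 0 < κ s)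
    (θ : ℝ → ℝ) (hθ : ∀ u, θ u = ∫ v in (0 : ℝ)..u, κ v)
    (ψ : ℝ → ℝ × ℝ × ℝ)
    (hψ : ∀ s, ψ s =
      (Real.sqrt (1 - n ^ 2) * ∫ u in (0 : ℝ)..s, Real.sinh (Real.sqrt (1 + m ^ 2) * θ u),
       Real.sqrt (1 - n ^ 2) * ∫ u in (0 : ℝ)..s, Real.cosh (Real.sqrt (1 + m ^ 2) * θ u),
       Real.sqrt (1 - n ^ 2) * ∫ u in (0 : ℝ)..s, m)) :
    (∀ s, g (deriv ψ s) (deriv ψ s) = 1) ∧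
    (∀ s, g (deriv (deriv ψ) s) (deriv (deriv ψ) s) < 0) ∧
    (∀ s, Real.sqrt (-(g (deriv (deriv ψ) s) (deriv (deriv ψ) s))) = κ s) ∧
    (∃ N B : ℝ → ℝ × ℝ × ℝ,
      (∀ s, deriv (deriv ψ) s = κ s • N s) ∧
      (∀ s, deriv N s = κ s • deriv ψ s + (m * κ s) • B s) ∧
      (∀ s, deriv B s = (m * κ s) • N s) ∧
      (∀ s, g (N s) (N s) = -1) ∧ (∀ s, g (B s) (B s) = 1)) := by
  obtain ⟨hn1, hn2⟩ := hn
  have h1n : (0:ℝ) < 1 - n ^ 2 := by nlinarith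
  set a := Real.sqrt (1 - n ^ 2) with ha
  have hapos : 0 < a := Real.sqrt_pos.mpr h1n
  have ha2 : a ^ 2 = 1 - n ^ 2 := Real.sq_sqrt h1n.le
  set c := Real.sqrt (1 + m ^ 2) with hc
  have hcpos : 0 < c := Real.sqrt_pos.mpr (by positivity)
  have hc2 : c ^ 2 = 1 + m ^ 2 := Real.sq_sqrt (by positivity)
  have hma : m * a = n := by rw [hm]; field_simp
  have hac : a * c = 1 := by
    have h : (a * c) ^ 2 = 1 := by rw [mul_pow, ha2, hc2]; nlinarith [hma]
    nlinarith [mul_pos hapos hcpos]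
  have hmc : m = n * c := by nlinarith [hma, hac]
  have hamn : a + m * n = c := by
    have h : a * (a + m * n) = a * c := by linear_combination ha2 + n * hma - hac
    exact mul_left_cancel₀ hapos.ne' h
  -- derivative of θ
  have hκc : Continuous κ := hκ.continuous
  have hθd : ∀ u, HasDerivAt θ (κ u) u := by
    intro u
    have h : HasDerivAt (fun x => ∫ v in (0:ℝ)..x, κ v) (κ u) u :=
      intervalIntegral.integral_hasDerivAt_right (hκc.intervalIntegrable _ _)
        (hκc.stronglyMeasurableAtFilter _ _) hκc.continuousAt
    exact h.congr_of_eventuallyEq (Filter.Eventually.of_forall hθ)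
  have hθdiff : Differentiable ℝ θ := fun u => (hθd u).differentiableAt
  have hθcont : Continuous θ := hθdiff.continuous
  have hsc : Continuous fun u => Real.sinh (c * θ u) :=
    Real.continuous_sinh.comp (continuous_const.mul hθcont)
  have hcc : Continuous fun u => Real.cosh (c * θ u) :=
    Real.continuous_cosh.comp (continuous_const.mul hθcont)
  have hSd : ∀ s, HasDerivAt (fun u => Real.sinh (c * θ u))
      (c * κ s * Real.cosh (c * θ s)) s := by
    intro s
    have h := (Real.hasDerivAt_sinh (c * θ s)).comp s ((hθd s).const_mul c)
    exact h.congr_deriv (by ring)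
  have hCd : ∀ s, HasDerivAt (fun u => Real.cosh (c * θ u))
      (c * κ s * Real.sinh (c * θ s)) s := by
    intro s
    have h := (Real.hasDerivAt_cosh (c * θ s)).comp s ((hθd s).const_mul c)
    exact h.congr_deriv (by ring)
  -- tangent
  set T : ℝ → ℝ × ℝ × ℝ :=
    fun s => (a * Real.sinh (c * θ s), a * Real.cosh (c * θ s), a * m) with hT
  have hψd : ∀ s, HasDerivAt ψ (T s) s := by
    intro s
    have h1 : HasDerivAt (fun u => a * ∫ x in (0:ℝ)..u, Real.sinh (c * θ x))
        (a * Real.sinh (c * θ s)) s :=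
      (intervalIntegral.integral_hasDerivAt_right (hsc.intervalIntegrable _ _)
        (hsc.stronglyMeasurableAtFilter _ _) hsc.continuousAt).const_mul a
    have h2 : HasDerivAt (fun u => a * ∫ x in (0:ℝ)..u, Real.cosh (c * θ x))
        (a * Real.cosh (c * θ s)) s :=
      (intervalIntegral.integral_hasDerivAt_right (hcc.intervalIntegrable _ _)
        (hcc.stronglyMeasurableAtFilter _ _) hcc.continuousAt).const_mul a
    have h3 : HasDerivAt (fun u => a * ∫ x in (0:ℝ)..u, m) (a * m) s :=
      (intervalIntegral.integral_hasDerivAt_right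
        ((continuous_const : Continuous fun _ : ℝ => m).intervalIntegrable _ _)
        ((continuous_const : Continuous fun _ : ℝ => m).stronglyMeasurableAtFilter _ _)
        continuous_const.continuousAt).const_mul a
    exact (hasDerivAt_prod3 h1 h2 h3).congr_of_eventuallyEq (Filter.Eventually.of_forall hψ)
  have hderivψ : deriv ψ = T := funext fun s => (hψd s).deriv
  have hTd : ∀ s, HasDerivAt T
      ((κ s * Real.cosh (c * θ s), κ s * Real.sinh (c * θ s), 0) : ℝ × ℝ × ℝ) s := by
    intro s
    have h1 : HasDerivAt (fun u => a * Real.sinh (c * θ u)) (κ s * Real.cosh (c * θ s)) s := by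
      have h := (hSd s).const_mul a
      refine h.congr_deriv (Eq.symm ?_)
      linear_combination (-(κ s * Real.cosh (c * θ s))) * hac
    have h2 : HasDerivAt (fun u => a * Real.cosh (c * θ u)) (κ s * Real.sinh (c * θ s)) s := by
      have h := (hCd s).const_mul a
      refine h.congr_deriv (Eq.symm ?_)
      linear_combination (-(κ s * Real.sinh (c * θ s))) * hac
    have h3 : HasDerivAt (fun _ : ℝ => a * m) 0 s := hasDerivAt_const s (a * m)
    exact hasDerivAt_prod3 h1 h2 h3
  have hderivT : deriv T =
      fun s => ((κ s * Real.cosh (c * θ s), κ s * Real.sinh (c * θ s), 0) : ℝ × ℝ × ℝ) :=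
    funext fun s => (hTd s).deriv
  have hcs : ∀ s, Real.cosh (c * θ s) ^ 2 - Real.sinh (c * θ s) ^ 2 = 1 :=
    fun s => Real.cosh_sq_sub_sinh_sq (c * θ s)
  have hgdd : ∀ s, g (deriv (deriv ψ) s) (deriv (deriv ψ) s) = -(κ s ^ 2) := by
    intro s
    rw [hderivψ, hderivT]
    simp only [g]
    linear_combination (-(κ s ^ 2)) * hcs s
  refine ⟨?_, ?_, ?_, ?_⟩
  · intro s
    rw [hderivψ]
    simp only [g, hT]
    linear_combination a ^ 2 * hcs s + ha2 + (m * a + n) * hma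
  · intro s
    rw [hgdd s]
    have := hκpos s; nlinarith
  · intro s
    rw [hgdd s, neg_neg, Real.sqrt_sq (hκpos s).le]
  · refine ⟨fun s => (Real.cosh (c * θ s), Real.sinh (c * θ s), 0),
      fun s => (n * Real.sinh (c * θ s), n * Real.cosh (c * θ s), -a), ?_, ?_, ?_, ?_, ?_⟩
    · intro s
      rw [hderivψ, hderivT]
      simp only [Prod.smul_mk, smul_eq_mul, mul_zero]
    · intro s
      have hNd : HasDerivAt (fun s => ((Real.cosh (c * θ s), Real.sinh (c * θ s), 0) : ℝ × ℝ × ℝ))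
          ((c * κ s * Real.sinh (c * θ s), c * κ s * Real.cosh (c * θ s), 0) : ℝ × ℝ × ℝ) s :=
        hasDerivAt_prod3 (hCd s) (hSd s) (hasDerivAt_const s 0)
      rw [hNd.deriv, hderivψ]
      simp only [hT, Prod.smul_mk, smul_eq_mul, Prod.mk_add_mk, Prod.mk.injEq]
      refine ⟨?_, ?_, ?_⟩
      · linear_combination (-(κ s * Real.sinh (c * θ s))) * hamn
      · linear_combination (-(κ s * Real.cosh (c * θ s))) * hamn
      · ring
    · intro s
      have hBd : HasDerivAt
          (fun s => ((n * Real.sinh (c * θ s), n * Real.cosh (c * θ s), -a) : ℝ × ℝ × ℝ))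
          ((n * (c * κ s * Real.cosh (c * θ s)), n * (c * κ s * Real.sinh (c * θ s)), 0)
            : ℝ × ℝ × ℝ) s :=
        hasDerivAt_prod3 ((hSd s).const_mul n) ((hCd s).const_mul n) (hasDerivAt_const s (-a))
      rw [hBd.deriv]
      simp only [Prod.smul_mk, smul_eq_mul, mul_zero, Prod.mk.injEq]
      refine ⟨?_, ?_, ?_⟩
      · linear_combination (-(κ s * Real.cosh (c * θ s))) * hmc
      · linear_combination (-(κ s * Real.sinh (c * θ s))) * hmc
      · trivial
    · intro s
      simp only [g]
      linear_combination -hcs s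
    · intro s
      simp only [g]
      linear_combination n ^ 2 * hcs s + ha2
end
end

section
/- Let n > 1, m = n/√(n²-1) (so m² > 1), and let κ : ℝ → ℝ be a smooth positive function. Define ψ(s) = √(n²-1) ∫₀ˢ (cosh(√(m²-1) θ(u)), sinh(√(m²-1) θ(u)), m) du where θ(u) = ∫₀ᵘ κ(v)dv. Then ψ is a unit-speed spacelike curve in E₁³ (g(ψ',ψ') = 1) with spacelike principal normal (g(ψ'',ψ'') > 0), curvature κ(s), and constant torsion-to-curvature ratio m. -/
noncomputable section
open Real

theorem stmt13 (n m : ℝ) (hn : n > 1)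
    (hm : m = n / Real.sqrt (n ^ 2 - 1))
    (κ : ℝ → ℝ) (hκ : ContDiff ℝ (⊤ : ℕ∞) κ) (hκpos : ∀ s, 0 < κ s)
    (θ : ℝ → ℝ) (hθ : ∀ u, θ u = ∫ v in (0 : ℝ)..u, κ v)
    (ψ : ℝ → ℝ × ℝ × ℝ)
    (hψ : ∀ s, ψ s =
      (Real.sqrt (n ^ 2 - 1) * ∫ u in (0 : ℝ)..s, Real.cosh (Real.sqrt (m ^ 2 - 1) * θ u),
       Real.sqrt (n ^ 2 - 1) * ∫ u in (0 : ℝ)..s, Real.sinh (Real.sqrt (m ^ 2 - 1) * θ u),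
       Real.sqrt (n ^ 2 - 1) * ∫ u in (0 : ℝ)..s, m)) :
    (∀ s, g (deriv ψ s) (deriv ψ s) = 1) ∧
    (∀ s, g (deriv (deriv ψ) s) (deriv (deriv ψ) s) > 0) ∧
    (∀ s, Real.sqrt (g (deriv (deriv ψ) s) (deriv (deriv ψ) s)) = κ s) ∧
    (∃ N B : ℝ → ℝ × ℝ × ℝ,
      (∀ s, deriv (deriv ψ) s = κ s • N s) ∧
      (∀ s, deriv N s = (-(κ s)) • deriv ψ s + (m * κ s) • B s) ∧
      (∀ s, deriv B s = (m * κ s) • N s) ∧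
      (∀ s, g (N s) (N s) = 1) ∧ (∀ s, g (B s) (B s) = -1)) := by
  set a := Real.sqrt (n ^ 2 - 1) with ha_def
  set c := Real.sqrt (m ^ 2 - 1) with hc_def
  have hn2 : (0:ℝ) < n ^ 2 - 1 := by nlinarith
  have ha2 : a ^ 2 = n ^ 2 - 1 := Real.sq_sqrt hn2.le
  have ha : 0 < a := Real.sqrt_pos.mpr hn2
  have hmn : m * a = n := by rw [hm]; field_simp
  have hc : c = 1 / a := by
    rw [hc_def]
    have : m ^ 2 - 1 = (1 / a) ^ 2 := by field_simp; nlinarith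
    rw [this, Real.sqrt_sq (by positivity)]
  have hac : a * c = 1 := by rw [hc]; field_simp
  have hnc : n * c = m := by rw [hc]; field_simp; linarith [hmn]
  have hmnac : m * n - a = c := by
    have h : (m * n - a) * a = c * a := by nlinarith [hmn, hac]
    exact mul_right_cancel₀ ha.ne' h
  -- θ derivative
  have hθfun : θ = fun u => ∫ v in (0:ℝ)..u, κ v := funext hθ
  have hθd : ∀ s, HasDerivAt θ (κ s) s := by
    intro s; rw [hθfun]
    exact (hκ.continuous.integral_hasStrictDerivAt 0 s).hasDerivAt
  have hθdiff : Differentiable ℝ θ := fun s => (hθd s).differentiableAt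
  have hθc : Continuous θ := hθdiff.continuous
  have hFd : ∀ s, HasDerivAt (fun u => c * θ u) (c * κ s) s := fun s => (hθd s).const_mul c
  have hFc : Continuous fun u => c * θ u := continuous_const.mul hθc
  -- ψ first derivative
  have hψfun : ψ = fun s => (a * ∫ u in (0:ℝ)..s, Real.cosh (c * θ u),
      a * ∫ u in (0:ℝ)..s, Real.sinh (c * θ u),
      a * ∫ u in (0:ℝ)..s, m) := funext hψ
  have hd1 : ∀ s, HasDerivAt ψ
      (a * Real.cosh (c * θ s), a * Real.sinh (c * θ s), a * m) s := by
    intro s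
    rw [hψfun]
    have h1 : HasDerivAt (fun s => a * ∫ u in (0:ℝ)..s, Real.cosh (c * θ u))
        (a * Real.cosh (c * θ s)) s :=
      (((Real.continuous_cosh.comp hFc).integral_hasStrictDerivAt 0 s).hasDerivAt).const_mul a
    have h2 : HasDerivAt (fun s => a * ∫ u in (0:ℝ)..s, Real.sinh (c * θ u))
        (a * Real.sinh (c * θ s)) s :=
      (((Real.continuous_sinh.comp hFc).integral_hasStrictDerivAt 0 s).hasDerivAt).const_mul a
    have h3 : HasDerivAt (fun s => a * ∫ u in (0:ℝ)..s, m) (a * m) s :=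
      ((continuous_const.integral_hasStrictDerivAt 0 s).hasDerivAt).const_mul a
    exact h1.prodMk (h2.prodMk h3)
  have hdψ : deriv ψ = fun s => (a * Real.cosh (c * θ s), a * Real.sinh (c * θ s), a * m) :=
    funext fun s => (hd1 s).deriv
  -- ψ second derivative
  have hd2 : ∀ s, HasDerivAt (deriv ψ)
      (κ s * Real.sinh (c * θ s), κ s * Real.cosh (c * θ s), 0) s := by
    intro s
    rw [hdψ]
    have h1 : HasDerivAt (fun s => a * Real.cosh (c * θ s)) (κ s * Real.sinh (c * θ s)) s := by
      have := ((hFd s).cosh).const_mul a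
      refine this.congr_deriv (Eq.symm ?_)
      linear_combination (-(Real.sinh (c * θ s) * κ s)) * hac
    have h2 : HasDerivAt (fun s => a * Real.sinh (c * θ s)) (κ s * Real.cosh (c * θ s)) s := by
      have := ((hFd s).sinh).const_mul a
      refine this.congr_deriv (Eq.symm ?_)
      linear_combination (-(Real.cosh (c * θ s) * κ s)) * hac
    have h3 : HasDerivAt (fun _ : ℝ => a * m) (0:ℝ) s := hasDerivAt_const s (a * m)
    exact h1.prodMk (h2.prodMk h3)
  have hddψ : deriv (deriv ψ) =
      fun s => (κ s * Real.sinh (c * θ s), κ s * Real.cosh (c * θ s), 0) :=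
    funext fun s => (hd2 s).deriv
  have hpyth : ∀ s, Real.cosh (c * θ s) ^ 2 - Real.sinh (c * θ s) ^ 2 = 1 :=
    fun s => Real.cosh_sq_sub_sinh_sq _
  have key2 : ∀ s, g (deriv (deriv ψ) s) (deriv (deriv ψ) s) = κ s ^ 2 := by
    intro s
    rw [hddψ]
    simp only [g]
    nlinarith [hpyth s]
  refine ⟨?_, ?_, ?_, ?_⟩
  · intro s
    rw [hdψ]
    simp only [g]
    nlinarith [hpyth s, hac, ha2]
  · intro s
    rw [key2 s]
    exact pow_pos (hκpos s) 2
  · intro s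
    rw [key2 s, Real.sqrt_sq (hκpos s).le]
  · refine ⟨fun s => (Real.sinh (c * θ s), Real.cosh (c * θ s), 0),
      fun s => (n * Real.cosh (c * θ s), n * Real.sinh (c * θ s), a), ?_, ?_, ?_, ?_, ?_⟩
    · intro s
      rw [hddψ]
      simp [Prod.ext_iff, smul_eq_mul]
    · intro s
      have h1 : HasDerivAt (fun s => Real.sinh (c * θ s))
          (Real.cosh (c * θ s) * (c * κ s)) s := (hFd s).sinh
      have h2 : HasDerivAt (fun s => Real.cosh (c * θ s))
          (Real.sinh (c * θ s) * (c * κ s)) s := (hFd s).cosh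
      have h3 : HasDerivAt (fun _ : ℝ => (0:ℝ)) 0 s := hasDerivAt_const s 0
      have hD := (h1.prodMk (h2.prodMk h3)).deriv
      rw [hD, hdψ]
      simp only [Prod.ext_iff, Prod.smul_def, Prod.fst_add, Prod.snd_add, smul_eq_mul,
        Prod.fst, Prod.snd]
      refine ⟨?_, ?_, ?_⟩
      · linear_combination (-(Real.cosh (c * θ s) * κ s)) * hmnac
      · linear_combination (-(Real.sinh (c * θ s) * κ s)) * hmnac
      · ring
    · intro s
      have h1 : HasDerivAt (fun s => n * Real.cosh (c * θ s))
          (n * (Real.sinh (c * θ s) * (c * κ s))) s := ((hFd s).cosh).const_mul n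
      have h2 : HasDerivAt (fun s => n * Real.sinh (c * θ s))
          (n * (Real.cosh (c * θ s) * (c * κ s))) s := ((hFd s).sinh).const_mul n
      have h3 : HasDerivAt (fun _ : ℝ => a) 0 s := hasDerivAt_const s a
      have hD := (h1.prodMk (h2.prodMk h3)).deriv
      rw [hD]
      simp only [Prod.ext_iff, Prod.smul_def, smul_eq_mul]
      refine ⟨?_, ?_, ?_⟩
      · linear_combination Real.sinh (c * θ s) * κ s * hnc
      · linear_combination Real.cosh (c * θ s) * κ s * hnc
      · simp
    · intro s
      simp only [g]
      nlinarith [hpyth s]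
    · intro s
      simp only [g]
      nlinarith [hpyth s, ha2]
end
end

section
/- Let n ∈ ℝ, m = n/√(1+n²) (so |m| < 1), and let κ : ℝ → ℝ be a smooth positive function. Define ψ(s) = √(n²+1) ∫₀ˢ (m, cos(√(1-m²) θ(u)), sin(√(1-m²) θ(u))) du where θ(u) = ∫₀ᵘ κ(v)dv. Then ψ is a unit-speed spacelike curve in E₁³ with spacelike principal normal, curvature κ(s), and its tangent satisfies g(ψ'(s), e₁) = -m√(n²+1) = -n constant, where e₁ = (1,0,0) is timelike. -/
noncomputable section
open Real

lemma prim_hasDerivAt {f : ℝ → ℝ} (hf : Continuous f) (s : ℝ) :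
    HasDerivAt (fun u => ∫ v in (0 : ℝ)..u, f v) (f s) s :=
  intervalIntegral.integral_hasDerivAt_right (hf.intervalIntegrable _ _)
    (hf.stronglyMeasurableAtFilter _ _) hf.continuousAt

theorem stmt14 (n m : ℝ)
    (hm : m = n / Real.sqrt (1 + n ^ 2))
    (κ : ℝ → ℝ) (hκ : ContDiff ℝ (⊤ : ℕ∞) κ) (hκpos : ∀ s, 0 < κ s)
    (θ : ℝ → ℝ) (hθ : ∀ u, θ u = ∫ v in (0 : ℝ)..u, κ v)
    (ψ : ℝ → ℝ × ℝ × ℝ)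
    (hψ : ∀ s, ψ s =
      (Real.sqrt (n ^ 2 + 1) * ∫ u in (0 : ℝ)..s, m,
       Real.sqrt (n ^ 2 + 1) * ∫ u in (0 : ℝ)..s, Real.cos (Real.sqrt (1 - m ^ 2) * θ u),
       Real.sqrt (n ^ 2 + 1) * ∫ u in (0 : ℝ)..s, Real.sin (Real.sqrt (1 - m ^ 2) * θ u))) :
    (∀ s, g (deriv ψ s) (deriv ψ s) = 1) ∧
    (∀ s, g (deriv (deriv ψ) s) (deriv (deriv ψ) s) > 0) ∧
    (∀ s, Real.sqrt (g (deriv (deriv ψ) s) (deriv (deriv ψ) s)) = κ s) ∧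
    (∀ s, g (deriv ψ s) ((1 : ℝ), (0 : ℝ), (0 : ℝ)) = -(m * Real.sqrt (n ^ 2 + 1))) ∧
    -(m * Real.sqrt (n ^ 2 + 1)) = -n := by
  have hθfun : θ = fun u => ∫ v in (0 : ℝ)..u, κ v := funext hθ
  have hψfun := funext hψ
  subst hθfun hψfun
  set a := Real.sqrt (n ^ 2 + 1) with ha_def
  set c := Real.sqrt (1 - m ^ 2) with hc_def
  have han : (0:ℝ) < n ^ 2 + 1 := by positivity
  have ha2 : a ^ 2 = n ^ 2 + 1 := Real.sq_sqrt (le_of_lt han)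
  have hapos : 0 < a := Real.sqrt_pos.2 han
  have hman : m * a = n := by
    rw [hm, ha_def, add_comm (1:ℝ)]
    field_simp
  have h1m : 1 - m ^ 2 = 1 / (n ^ 2 + 1) := by
    rw [hm]
    rw [div_pow, Real.sq_sqrt (by positivity : (0:ℝ) ≤ 1 + n ^ 2)]
    field_simp
    ring
  have hac : a * c = 1 := by
    rw [ha_def, hc_def, h1m, ← Real.sqrt_mul (le_of_lt han)]
    rw [mul_one_div, div_self (ne_of_gt han), Real.sqrt_one]
  -- differentiability of θ
  have hκc : Continuous κ := hκ.continuous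
  have hθd : ∀ u, HasDerivAt (fun u => ∫ v in (0 : ℝ)..u, κ v) (κ u) u :=
    fun u => prim_hasDerivAt hκc u
  have hθcont : Continuous (fun u => ∫ v in (0 : ℝ)..u, κ v) :=
    continuous_iff_continuousAt.2 fun u => (hθd u).continuousAt
  set θ := fun u => ∫ v in (0 : ℝ)..u, κ v with hθ_def
  have hcosc : Continuous (fun u => Real.cos (c * θ u)) := by fun_prop
  have hsinc : Continuous (fun u => Real.sin (c * θ u)) := by fun_prop
  -- first derivative
  set T : ℝ → ℝ × ℝ × ℝ :=
    fun s => (a * m, a * Real.cos (c * θ s), a * Real.sin (c * θ s)) with hT_def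
  have hTd : ∀ s, HasDerivAt (fun s =>
      (a * ∫ u in (0 : ℝ)..s, m,
       a * ∫ u in (0 : ℝ)..s, Real.cos (c * θ u),
       a * ∫ u in (0 : ℝ)..s, Real.sin (c * θ u))) (T s) s := by
    intro s
    exact HasDerivAt.prodMk ((prim_hasDerivAt continuous_const s).const_mul a)
      (HasDerivAt.prodMk ((prim_hasDerivAt hcosc s).const_mul a)
        ((prim_hasDerivAt hsinc s).const_mul a))
  have hderiv1 : deriv (fun s =>
      (a * ∫ u in (0 : ℝ)..s, m,
       a * ∫ u in (0 : ℝ)..s, Real.cos (c * θ u),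
       a * ∫ u in (0 : ℝ)..s, Real.sin (c * θ u))) = T :=
    funext fun s => (hTd s).deriv
  -- second derivative
  have hT2 : ∀ s, HasDerivAt T
      (0, a * (-Real.sin (c * θ s) * (c * κ s)), a * (Real.cos (c * θ s) * (c * κ s))) s := by
    intro s
    have hcθ : HasDerivAt (fun u => c * θ u) (c * κ s) s := (hθd s).const_mul c
    exact HasDerivAt.prodMk (hasDerivAt_const s (a * m))
      (HasDerivAt.prodMk (hcθ.cos.const_mul a) (hcθ.sin.const_mul a))
  have hderiv2 : deriv T = fun s =>
      ((0:ℝ), a * (-Real.sin (c * θ s) * (c * κ s)), a * (Real.cos (c * θ s) * (c * κ s))) :=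
    funext fun s => (hT2 s).deriv
  rw [hderiv1, hderiv2]
  have pyth : ∀ s, Real.sin (c * θ s) ^ 2 + Real.cos (c * θ s) ^ 2 = 1 :=
    fun s => Real.sin_sq_add_cos_sq _
  refine ⟨fun s => ?_, fun s => ?_, fun s => ?_, fun s => ?_, ?_⟩
  · simp only [g, hT_def]
    have key : -(a * m * (a * m)) + a * Real.cos (c * θ s) * (a * Real.cos (c * θ s))
        + a * Real.sin (c * θ s) * (a * Real.sin (c * θ s))
        = a ^ 2 * (Real.sin (c * θ s) ^ 2 + Real.cos (c * θ s) ^ 2) - a ^ 2 * m ^ 2 := by ring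
    rw [key, pyth s, ha2]
    have hm2 : m ^ 2 * (n ^ 2 + 1) = n ^ 2 := by
      rw [← ha2, ← mul_pow, hman]
    linarith
  · simp only [g]
    have key : -(0 * 0) + a * (-Real.sin (c * θ s) * (c * κ s)) * (a * (-Real.sin (c * θ s) * (c * κ s)))
        + a * (Real.cos (c * θ s) * (c * κ s)) * (a * (Real.cos (c * θ s) * (c * κ s)))
        = (a * c) ^ 2 * κ s ^ 2 * (Real.sin (c * θ s) ^ 2 + Real.cos (c * θ s) ^ 2) := by ring
    rw [key, pyth s, hac]
    have := hκpos s
    nlinarith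
  · simp only [g]
    have key : -(0 * 0) + a * (-Real.sin (c * θ s) * (c * κ s)) * (a * (-Real.sin (c * θ s) * (c * κ s)))
        + a * (Real.cos (c * θ s) * (c * κ s)) * (a * (Real.cos (c * θ s) * (c * κ s)))
        = (a * c) ^ 2 * κ s ^ 2 * (Real.sin (c * θ s) ^ 2 + Real.cos (c * θ s) ^ 2) := by ring
    rw [key, pyth s, hac, one_pow, one_mul, mul_one, Real.sqrt_sq (le_of_lt (hκpos s))]
  · simp only [g, hT_def]; ring
  · rw [neg_inj]; exact hman
end
end
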